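/- Chakiri's Lemma: Let t = t_1 · t_2 ⋯ t_m be a factorized expression in a group G. Then this factorization is invariant under t^k for every integer k; that is, for every k ∈ ℤ the tuple ((t_1)_{t^k}, …, (t_m)_{t^k}) is Hurwitz equivalent to (t_1, …, t_m). -/

import Mathlib

/-!
Conjugating every entry of a tuple by the same element (written `c • t`, for `c : ConjAct G`)
commutes with Hurwitz moves, so the `c` with `c • t` Hurwitz equivalent to `t` form a subgroup. It therefore suffices to
show that conjugation by the product `t₁ ⋯ t_m` itself lies in it. The moves `R_1, …, R_{m-1}`
carry `t₁` to the end while conjugating the entries it passes, turning `(t₁, …, t_m)` into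
`t₁ • (t₂, …, t_m, t₁)`; repeating this sweep `m` times yields `(t₁ ⋯ t_m) • t`.
-/

variable {G : Type*} [Group G] {m : ℕ}

/-- The Hurwitz move `R_k` (0-indexed: `0 ≤ k`, `k + 1 < m`) on tuples in `G^m`:
it sends `t` to the tuple `s` with `s i = t i` for `i ≠ k, k+1`,
`s k = t k * t (k+1) * (t k)⁻¹` and `s (k+1) = t k`. -/
def hurwitzMove (k : ℕ) (hk : k + 1 < m) (t : Fin m → G) : Fin m → G :=
  fun i =>
    if (i : ℕ) = k then
      t ⟨k, Nat.lt_of_succ_lt hk⟩ * t ⟨k + 1, hk⟩ * (t ⟨k, Nat.lt_of_succ_lt hk⟩)⁻¹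
    else if (i : ℕ) = k + 1 then
      t ⟨k, Nat.lt_of_succ_lt hk⟩
    else t i

/-- `s` is obtained from `t` by a single Hurwitz move. -/
def HurwitzStep (t s : Fin m → G) : Prop :=
  ∃ (k : ℕ) (hk : k + 1 < m), s = hurwitzMove k hk t

/-- Hurwitz equivalence: the equivalence relation generated by Hurwitz moves. -/
def HurwitzEquiv : (Fin m → G) → (Fin m → G) → Prop :=
  Relation.EqvGen HurwitzStep

/-- A factorized expression `t = t 0 * ⋯ * t (m-1)` is invariant under `h`
if the componentwise conjugate tuple `(h⁻¹ * t i * h)` is Hurwitz equivalent to `t`. -/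
def FactorizationInvariant (t : Fin m → G) (h : G) : Prop :=
  HurwitzEquiv (fun i => h⁻¹ * t i * h) t

open ConjAct

namespace HurwitzEquiv

theorem refl (t : Fin m → G) : HurwitzEquiv t t := Relation.EqvGen.refl t

theorem symm {t s : Fin m → G} (h : HurwitzEquiv t s) : HurwitzEquiv s t :=
  Relation.EqvGen.symm _ _ h

theorem trans {t s u : Fin m → G} (h₁ : HurwitzEquiv t s) (h₂ : HurwitzEquiv s u) :
    HurwitzEquiv t u :=
  Relation.EqvGen.trans _ _ _ h₁ h₂

end HurwitzEquiv

theorem HurwitzStep.hurwitzEquiv {t s : Fin m → G} (h : HurwitzStep t s) : HurwitzEquiv t s :=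
  Relation.EqvGen.rel _ _ h

theorem hurwitzMove_smul (c : ConjAct G) (k : ℕ) (hk : k + 1 < m) (t : Fin m → G) :
    hurwitzMove k hk (c • t) = c • hurwitzMove k hk t := by
  funext i
  simp only [hurwitzMove, Pi.smul_apply, ConjAct.smul_def]
  split_ifs <;> group

theorem HurwitzEquiv.smul {t s : Fin m → G} (c : ConjAct G) (h : HurwitzEquiv t s) :
    HurwitzEquiv (c • t) (c • s) := by
  induction h with
  | rel t s hts =>
    obtain ⟨k, hk, rfl⟩ := hts
    exact HurwitzStep.hurwitzEquiv ⟨k, hk, (hurwitzMove_smul c k hk t).symm⟩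
  | refl t => exact .refl _
  | symm _ _ _ ih => exact ih.symm
  | trans _ _ _ _ _ ih₁ ih₂ => exact ih₁.trans ih₂

def hurwitzStabilizer (t : Fin m → G) : Subgroup (ConjAct G) where
  carrier := {c | HurwitzEquiv (c • t) t}
  one_mem' := show HurwitzEquiv ((1 : ConjAct G) • t) t by rw [one_smul]; exact .refl t
  mul_mem' {a b} (ha : HurwitzEquiv (a • t) t) (hb : HurwitzEquiv (b • t) t) :=
    show HurwitzEquiv ((a * b) • t) t by rw [mul_smul]; exact (hb.smul a).trans ha
  inv_mem' {a} (ha : HurwitzEquiv (a • t) t) :=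
    show HurwitzEquiv (a⁻¹ • t) t by simpa only [inv_smul_smul] using (ha.smul a⁻¹).symm

section Sweep

variable {n : ℕ}

/-- The tuple reached from `t` after the Hurwitz moves `R_0, …, R_{j-1}`: the first entry
`t 0` has travelled to position `j`, conjugating the entries it passed. -/
def partialSweep (t : Fin (n + 1) → G) (j : ℕ) : Fin (n + 1) → G := fun i =>
  if (i : ℕ) < j then t 0 * t (i + 1) * (t 0)⁻¹ else if (i : ℕ) = j then t 0 else t i

theorem partialSweep_zero (t : Fin (n + 1) → G) : partialSweep t 0 = t := by
  funext i
  by_cases hi : (i : ℕ) = 0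
  · obtain rfl : i = 0 := Fin.ext hi
    simp [partialSweep]
  · simp [partialSweep, hi]

theorem partialSweep_succ (t : Fin (n + 1) → G) {j : ℕ} (hj : j + 1 < n + 1) :
    partialSweep t (j + 1) = hurwitzMove j hj (partialSweep t j) := by
  funext ⟨i, hi⟩
  have hsucc : (⟨j, Nat.lt_of_succ_lt hj⟩ : Fin (n + 1)) + 1 = ⟨j + 1, hj⟩ := by
    ext; simp [Fin.val_add, Nat.mod_eq_of_lt hj]
  simp only [partialSweep, hurwitzMove]
  split_ifs <;> first | omega | rfl | (subst_vars; rw [hsucc])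

theorem partialSweep_last (t : Fin (n + 1) → G) :
    partialSweep t n = toConjAct (t 0) • fun i => t (i + 1) := by
  funext i
  simp only [partialSweep, Pi.smul_apply, toConjAct_smul]
  rcases (Fin.le_last i).lt_or_eq with hi | rfl
  · rw [if_pos (by simpa [Fin.lt_def] using hi)]
  · simp [Fin.last_add_one]

theorem hurwitzEquiv_smul_rotate (t : Fin (n + 1) → G) :
    HurwitzEquiv t (toConjAct (t 0) • fun i => t (i + 1)) := by
  suffices ∀ j ≤ n, HurwitzEquiv t (partialSweep t j) from partialSweep_last t ▸ this n le_rfl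
  intro j hj
  induction j with
  | zero => simpa only [partialSweep_zero] using .refl t
  | succ j ih =>
    rw [partialSweep_succ t (by omega)]
    exact (ih (by omega)).trans (HurwitzStep.hurwitzEquiv ⟨j, _, rfl⟩)

open Fin.NatCast in
theorem hurwitzEquiv_smul_prod_take (t : Fin (n + 1) → G) {j : ℕ} (hj : j ≤ n + 1) :
    HurwitzEquiv t
      (toConjAct ((List.ofFn t).take j).prod • fun i => t (i + (j : Fin (n + 1)))) := by
  induction j with
  | zero => simpa using .refl t
  | succ j ih =>
    have hj' : j < n + 1 := by omega
    have hfirst : (0 : Fin (n + 1)) + j = ⟨j, hj'⟩ := by ext; simp [Nat.mod_eq_of_lt hj']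
    have hprod : ((List.ofFn t).take (j + 1)).prod
        = ((List.ofFn t).take j).prod * t ⟨j, hj'⟩ := by
      rw [List.prod_take_succ _ j (by simpa using hj'), List.getElem_ofFn]
    have hsweep := (hurwitzEquiv_smul_rotate fun i => t (i + (j : Fin (n + 1)))).smul
      (toConjAct ((List.ofFn t).take j).prod)
    rw [hfirst, smul_smul, ← map_mul, ← hprod] at hsweep
    convert (ih (by omega)).trans hsweep using 4
    rw [Nat.cast_succ, add_right_comm, add_assoc]

theorem hurwitzEquiv_smul_prod (t : Fin (n + 1) → G) :
    HurwitzEquiv t (toConjAct (List.ofFn t).prod • t) := by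
  have h := hurwitzEquiv_smul_prod_take t le_rfl
  rw [List.take_of_length_le (by simp)] at h
  simpa only [Fin.natCast_self, add_zero] using h

end Sweep

theorem toConjAct_prod_mem_hurwitzStabilizer (t : Fin m → G) :
    toConjAct (List.ofFn t).prod ∈ hurwitzStabilizer t := by
  cases m with
  | zero => simp
  | succ n => exact (hurwitzEquiv_smul_prod t).symm

/-- Chakiri's Lemma: a factorized expression `t = t 0 * ⋯ * t (m-1)`
in a group `G` is invariant under `t^k` for every integer `k`. -/
theorem chakiri (t : Fin m → G) (k : ℤ) :
    FactorizationInvariant t ((List.ofFn t).prod ^ k) := by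
  have hmem : toConjAct (List.ofFn t).prod ^ (-k) ∈ hurwitzStabilizer t :=
    zpow_mem (toConjAct_prod_mem_hurwitzStabilizer t) (-k)
  have hconj : (fun i => ((List.ofFn t).prod ^ k)⁻¹ * t i * (List.ofFn t).prod ^ k)
      = toConjAct (List.ofFn t).prod ^ (-k) • t := by
    funext i
    simp [ConjAct.smul_def, zpow_neg]
  rw [FactorizationInvariant, hconj]
  exact hmem
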